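/- For the metric D(x,y) = ∫₀^π d_I(⟨x,u_θ⟩, ⟨y,u_θ⟩) dθ on the open unit disk: if x, y, z ∈ D² and y does NOT lie on the Euclidean segment [x,z], then D(x,z) < D(x,y) + D(y,z) (strict inequality). -/

import Mathlib

/-!
Pointwise in `θ`, `d_I` is the pullback of `|· - ·|` along the strictly increasing map `f`, so the
triangle inequality holds for every integrand, and it is strict exactly when the projection of `y`
onto `u θ` lies outside the interval spanned by the projections of `x` and `z`. A line separating
`y` from the segment `[x, z]` (Hahn–Banach) has a normal of the form `c • u θ` with `θ ∈ [0, π]`,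
which gives such a direction; continuity of the integrands then makes the integrated inequality
strict.
-/

open Real MeasureTheory Set

/-- f(t) = t/(1-|t|) -/
noncomputable def f (t : ℝ) : ℝ := t / (1 - |t|)

/-- d_I(s,t) = |f(s) - f(t)| -/
noncomputable def dI (s t : ℝ) : ℝ := |f s - f t|

/-- the unit direction u_θ = (cos θ, sin θ) -/
noncomputable def u (θ : ℝ) : EuclideanSpace ℝ (Fin 2) := WithLp.toLp 2 ![Real.cos θ, Real.sin θ]

/-- D(x,y) = ∫₀^π d_I(⟨x,u_θ⟩, ⟨y,u_θ⟩) dθ -/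
noncomputable def Dmet (x y : EuclideanSpace ℝ (Fin 2)) : ℝ :=
  ∫ θ in (0:ℝ)..π, dI (inner ℝ x (u θ) : ℝ) (inner ℝ y (u θ) : ℝ)

open scoped RealInnerProductSpace

theorem abs_sub_lt_abs_sub_add_abs_sub_of_notMem_uIcc {α : Type*} [AddCommGroup α]
    [LinearOrder α] [IsOrderedAddMonoid α] {a b c : α} (h : b ∉ uIcc a c) :
    |a - c| < |a - b| + |b - c| := by
  refine (abs_sub_le a b c).lt_of_ne fun heq => h ?_
  rw [← sub_add_sub_cancel a b c, abs_add_eq_add_abs_iff] at heq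
  rcases heq with ⟨hab, hbc⟩ | ⟨hab, hbc⟩
  · exact mem_uIcc.2 <| Or.inr ⟨sub_nonneg.1 hbc, sub_nonneg.1 hab⟩
  · exact mem_uIcc.2 <| Or.inl ⟨sub_nonpos.1 hab, sub_nonpos.1 hbc⟩

theorem StrictMonoOn.mem_uIcc_iff {α β : Type*} [LinearOrder α] [LinearOrder β] {g : α → β}
    {s : Set α} (hg : StrictMonoOn g s) {a b c : α} (ha : a ∈ s) (hb : b ∈ s) (hc : c ∈ s) :
    g b ∈ uIcc (g a) (g c) ↔ b ∈ uIcc a c := by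
  simp only [mem_uIcc, hg.le_iff_le ha hb, hg.le_iff_le hb hc, hg.le_iff_le hc hb,
    hg.le_iff_le hb ha]

theorem mul_mem_uIcc_mul_iff {α : Type*} [Field α] [LinearOrder α] [IsStrictOrderedRing α]
    {a b c d : α} (hc : c ≠ 0) : c * b ∈ uIcc (c * a) (c * d) ↔ b ∈ uIcc a d := by
  rw [← image_const_mul_uIcc]
  exact (mul_right_injective₀ hc).mem_set_image

theorem exists_dual_notMem_uIcc_of_notMem_segment {E : Type*} [AddCommGroup E]
    [TopologicalSpace E] [Module ℝ E] [IsTopologicalAddGroup E] [ContinuousSMul ℝ E]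
    [LocallyConvexSpace ℝ E] [T2Space E] {x y z : E} (hy : y ∉ segment ℝ x z) :
    ∃ ℓ : StrongDual ℝ E, ℓ y ∉ uIcc (ℓ x) (ℓ z) := by
  rw [← convexHull_pair] at hy
  obtain ⟨ℓ, s, hys, hs⟩ := geometric_hahn_banach_point_closed (convex_convexHull ℝ _)
    ((toFinite _).isClosed_convexHull ℝ) hy
  have hx := hs x (subset_convexHull ℝ _ (by simp))
  have hz := hs z (subset_convexHull ℝ _ (by simp))
  refine ⟨ℓ, fun hmem => ?_⟩
  rcases mem_uIcc.1 hmem with ⟨h, -⟩ | ⟨h, -⟩ <;> linarith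

theorem strictMonoOn_f : StrictMonoOn f (Ioo (-1) 1) := by
  intro s ⟨hs, hs'⟩ t ⟨ht, ht'⟩ hst
  unfold f
  rcases abs_cases s with ⟨hs1, hs2⟩ | ⟨hs1, hs2⟩ <;>
    rcases abs_cases t with ⟨ht1, ht2⟩ | ⟨ht1, ht2⟩ <;> rw [hs1, ht1] <;>
    rw [div_lt_div_iff₀ (by linarith) (by linarith)] <;> nlinarith

theorem continuousOn_f : ContinuousOn f (Ioo (-1) 1) :=
  continuousOn_id.div (continuous_const.sub continuous_abs).continuousOn fun t ht => by
    have := abs_lt.2 ht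
    linarith

theorem dI_lt_dI_add_dI {a b c : ℝ} (ha : a ∈ Ioo (-1) 1) (hb : b ∈ Ioo (-1) 1)
    (hc : c ∈ Ioo (-1) 1) (h : b ∉ uIcc a c) : dI a c < dI a b + dI b c :=
  abs_sub_lt_abs_sub_add_abs_sub_of_notMem_uIcc <| mt (strictMonoOn_f.mem_uIcc_iff ha hb hc).1 h

theorem continuous_u : Continuous u := by
  unfold u
  fun_prop

theorem norm_u (θ : ℝ) : ‖u θ‖ = 1 := by
  simp [u, EuclideanSpace.norm_eq, Fin.sum_univ_two]

theorem inner_u_mem_Ioo {x : EuclideanSpace ℝ (Fin 2)} (hx : ‖x‖ < 1) (θ : ℝ) :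
    ⟪x, u θ⟫ ∈ Ioo (-1) 1 :=
  abs_lt.1 <| (abs_real_inner_le_norm x (u θ)).trans_lt <| by rwa [norm_u, mul_one]

theorem continuous_dI_inner_u {x y : EuclideanSpace ℝ (Fin 2)} (hx : ‖x‖ < 1) (hy : ‖y‖ < 1) :
    Continuous fun θ => dI ⟪x, u θ⟫ ⟪y, u θ⟫ := by
  have hf : ∀ v : EuclideanSpace ℝ (Fin 2), ‖v‖ < 1 → Continuous fun θ => f ⟪v, u θ⟫ :=
    fun v hv => continuousOn_f.comp_continuous (continuous_const.inner continuous_u)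
      (inner_u_mem_Ioo hv)
  exact ((hf x hx).sub (hf y hy)).abs

theorem eq_norm_smul_u_arccos {w : EuclideanSpace ℝ (Fin 2)} (hw : w ≠ 0) (hw1 : 0 ≤ w 1) :
    w = ‖w‖ • u (arccos (w 0 / ‖w‖)) := by
  have hn : 0 < ‖w‖ := norm_pos_iff.2 hw
  have hsq : ‖w‖ ^ 2 = w 0 ^ 2 + w 1 ^ 2 := by
    simp [EuclideanSpace.norm_sq_eq, Fin.sum_univ_two]
  have hle : |w 0 / ‖w‖| ≤ 1 := by
    rw [abs_div, abs_norm, div_le_one hn]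
    exact abs_le_of_sq_le_sq (by nlinarith) hn.le
  have hsin : 1 - (w 0 / ‖w‖) ^ 2 = (w 1 / ‖w‖) ^ 2 := by
    field_simp
    linarith
  ext i
  fin_cases i
  · simp [u, cos_arccos (abs_le.1 hle).1 (abs_le.1 hle).2, mul_div_cancel₀ _ hn.ne']
  · simp [u, sin_arccos, hsin, sqrt_sq (div_nonneg hw1 hn.le), mul_div_cancel₀ _ hn.ne']

theorem exists_smul_u {w : EuclideanSpace ℝ (Fin 2)} (hw : w ≠ 0) :
    ∃ θ ∈ Icc 0 π, ∃ c : ℝ, c ≠ 0 ∧ w = c • u θ := by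
  rcases le_total 0 (w 1) with hw1 | hw1
  · exact ⟨_, ⟨arccos_nonneg _, arccos_le_pi _⟩, ‖w‖, norm_ne_zero_iff.2 hw,
      eq_norm_smul_u_arccos hw hw1⟩
  · have h := eq_norm_smul_u_arccos (neg_ne_zero.2 hw) (by simpa using hw1)
    refine ⟨arccos ((-w) 0 / ‖-w‖), ⟨arccos_nonneg _, arccos_le_pi _⟩, -‖-w‖,
      by simpa using hw, ?_⟩
    rw [neg_smul, ← h, neg_neg]

theorem exists_inner_u_notMem_uIcc {x y z : EuclideanSpace ℝ (Fin 2)}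
    (hy : y ∉ segment ℝ x z) : ∃ θ ∈ Icc 0 π, ⟪y, u θ⟫ ∉ uIcc ⟪x, u θ⟫ ⟪z, u θ⟫ := by
  obtain ⟨ℓ, hℓ⟩ := exists_dual_notMem_uIcc_of_notMem_segment hy
  set w := (InnerProductSpace.toDual ℝ _).symm ℓ
  have hℓw : ∀ v, ℓ v = ⟪w, v⟫ := fun v => InnerProductSpace.toDual_symm_apply.symm
  have hw : w ≠ 0 := fun hw => hℓ <| by simp [hℓw, hw]
  obtain ⟨θ, hθ, c, hc, hwc⟩ := exists_smul_u hw
  refine ⟨θ, hθ, fun hmem => hℓ ?_⟩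
  simp only [hℓw, hwc, real_inner_smul_left, real_inner_comm _ (u θ)]
  exact (mul_mem_uIcc_mul_iff hc).2 hmem

theorem Dmet_strict_triangle_off_segment (x y z : EuclideanSpace ℝ (Fin 2))
    (hx : ‖x‖ < 1) (hy : ‖y‖ < 1) (hz : ‖z‖ < 1)
    (hseg : ¬ ∃ lam ∈ Icc (0:ℝ) 1, y = (1 - lam) • x + lam • z) :
    Dmet x z < Dmet x y + Dmet y z := by
  have hy_seg : y ∉ segment ℝ x z := by simpa [segment_eq_image, eq_comm] using hseg
  obtain ⟨θ₀, hθ₀, hθ₀_out⟩ := exists_inner_u_notMem_uIcc hy_seg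
  have cxy := continuous_dI_inner_u hx hy
  have cyz := continuous_dI_inner_u hy hz
  rw [Dmet, Dmet, Dmet, ← intervalIntegral.integral_add (cxy.intervalIntegrable _ _)
    (cyz.intervalIntegrable _ _)]
  exact intervalIntegral.integral_lt_integral_of_continuousOn_of_le_of_exists_lt pi_pos
    (continuous_dI_inner_u hx hz).continuousOn (cxy.add cyz).continuousOn
    (fun θ _ => abs_sub_le _ _ _)
    ⟨θ₀, hθ₀, dI_lt_dI_add_dI (inner_u_mem_Ioo hx θ₀) (inner_u_mem_Ioo hy θ₀)
      (inner_u_mem_Ioo hz θ₀) hθ₀_out⟩
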